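/- For every integer n ≥ 2, B(n) ≤ B'(n), where B(n) = 1 + Σ_{d | n} c(d)·(d + n − 2) and B'(n) = 1 + (n−1)! + (n−2)·Σ_{d | n} φ(n/d)·n^{d−1}·(d−1)!/d^d, both sums ranging over positive divisors d of n and φ denoting Euler's totient function. -/

import Mathlib

open Equiv Filter Topology

/-- The cyclic permutation `σ : i ↦ i + 1` of `ZMod n`. -/
def cyc (n : ℕ) : Equiv.Perm (ZMod n) := Equiv.addRight (1 : ZMod n)

/-- The equivalence relation `R₂`: `π R₂ π'` iff `π' = σ^i ∘ π` for some integer `i`. -/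
def incSetoid (n : ℕ) : Setoid (Equiv.Perm (ZMod n)) where
  r π π' := ∃ i : ℤ, π' = cyc n ^ i * π
  iseqv := by
    constructor
    · exact fun π => ⟨0, by simp⟩
    · rintro π π' ⟨i, rfl⟩
      exact ⟨-i, by rw [← mul_assoc, ← zpow_add]; simp⟩
    · rintro a b c ⟨i, rfl⟩ ⟨j, rfl⟩
      exact ⟨j + i, by rw [← mul_assoc, ← zpow_add]⟩

/-- The set of `R₂`-equivalence classes. -/
def IncClasses (n : ℕ) := Quotient (incSetoid n)

/-- The well-defined map `inc(π) ↦ inc(π ∘ σ)` on `R₂`-classes. -/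
def incShift (n : ℕ) : IncClasses n → IncClasses n :=
  Quot.map (fun π => π * cyc n)
    (by rintro π π' ⟨i, rfl⟩; exact ⟨i, by simp only [mul_assoc]⟩)

/-- The 1-cycle (orbit under `inc(ρ) ↦ inc(ρ∘σ)`) of a class `q`. -/
def oneCycle (n : ℕ) (q : IncClasses n) : Set (IncClasses n) :=
  Set.range fun i : ℕ => (incShift n)^[i] q

/-- `c(d)`: the number of 1-cycles of cardinality `d`. -/
noncomputable def numCycles (n d : ℕ) : ℕ :=
  Set.ncard {S : Set (IncClasses n) | (∃ q, S = oneCycle n q) ∧ S.ncard = d}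

/-- `B(n) = 1 + Σ_{d ∣ n} c(d)·(d + n − 2)`, the sum over positive divisors `d` of `n`. -/
noncomputable def Bbound (n : ℕ) : ℕ :=
  1 + ∑ d ∈ n.divisors, numCycles n d * (d + n - 2)

/-- `B'(n) = 1 + (n−1)! + (n−2)·Σ_{d ∣ n} φ(n/d)·n^(d−1)·(d−1)!/d^d`, as a real number. -/
noncomputable def Bprime (n : ℕ) : ℝ :=
  1 + (n - 1).factorial +
    ((n : ℝ) - 2) *
      ∑ d ∈ n.divisors,
        (Nat.totient (n / d) : ℝ) * (n : ℝ) ^ (d - 1) * ((d - 1).factorial : ℝ) / (d : ℝ) ^ d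

section Aux

open Function Subgroup

variable {n : ℕ}

lemma cyc_pow_eq (n k : ℕ) : cyc n ^ k = Equiv.addRight ((k : ZMod n)) := by
  induction k with
  | zero => ext x; simp [cyc]
  | succ k ih =>
      rw [pow_succ, ih]
      ext x
      simp only [Equiv.Perm.mul_apply, Equiv.coe_addRight, cyc]
      push_cast
      ring

lemma cyc_pow_apply (k : ℕ) (x : ZMod n) : (cyc n ^ k) x = x + (k : ZMod n) := by
  rw [cyc_pow_eq]; rfl

lemma cyc_pow_n : cyc n ^ n = 1 := by
  ext x
  rw [cyc_pow_apply]
  simp [ZMod.natCast_self]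

lemma cyc_zpow_eq (n : ℕ) (z : ℤ) : cyc n ^ z = Equiv.addRight ((z : ZMod n)) := by
  cases z with
  | ofNat k =>
      rw [Int.ofNat_eq_coe, zpow_natCast, cyc_pow_eq]
      norm_cast
  | negSucc k =>
      rw [zpow_negSucc, cyc_pow_eq, Equiv.Perm.inv_def, Equiv.addRight_symm]
      congr 1
      simp [Int.cast_negSucc]

/-- The homomorphism `Multiplicative (ZMod n) →* Perm (ZMod n)` by translation. -/
def addRightHom (n : ℕ) : Multiplicative (ZMod n) →* Equiv.Perm (ZMod n) where
  toFun a := Equiv.addRight a.toAdd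
  map_one' := by ext x; simp
  map_mul' a b := by
    ext x
    simp only [Equiv.Perm.mul_apply, Equiv.coe_addRight, toAdd_mul]
    ring

lemma addRightHom_injective : Function.Injective (addRightHom n) := by
  intro a b h
  have := congrArg (fun e : Equiv.Perm (ZMod n) => e 0) h
  simp only [addRightHom, MonoidHom.coe_mk, OneHom.coe_mk, Equiv.coe_addRight, zero_add] at this
  exact Multiplicative.toAdd.injective this

lemma orderOf_addRight (c : ZMod n) :
    orderOf (Equiv.addRight c : Equiv.Perm (ZMod n)) = addOrderOf c := by
  have := orderOf_injective (addRightHom n) addRightHom_injective (Multiplicative.ofAdd c)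
  simpa [addRightHom, orderOf_ofAdd_eq_addOrderOf] using this

lemma orderOf_cyc [NeZero n] : orderOf (cyc n) = n := by
  have h := ZMod.addOrderOf_coe 1 (NeZero.ne n)
  rw [Nat.cast_one, Nat.gcd_one_right, Nat.div_one] at h
  rw [cyc, orderOf_addRight, h]

lemma incShift_mk (π : Equiv.Perm (ZMod n)) :
    incShift n (Quotient.mk (incSetoid n) π) = Quotient.mk (incSetoid n) (π * cyc n) := rfl

lemma incShift_iterate (k : ℕ) (π : Equiv.Perm (ZMod n)) :
    (incShift n)^[k] (Quotient.mk (incSetoid n) π)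
      = Quotient.mk (incSetoid n) (π * cyc n ^ k) := by
  induction k with
  | zero => rw [pow_zero, mul_one]; rfl
  | succ k ih => exact (Function.iterate_succ_apply' _ _ _).trans (by rw [ih, incShift_mk, pow_succ, mul_assoc])

lemma incShift_iterate_n (q : IncClasses n) : (incShift n)^[n] q = q := by
  refine Quotient.inductionOn q fun π => ?_
  rw [incShift_iterate, cyc_pow_n, mul_one]

lemma mem_periodicPts_incShift (hn : 0 < n) (q : IncClasses n) :
    q ∈ periodicPts (incShift n) :=
  ⟨n, hn, incShift_iterate_n q⟩

lemma oneCycle_iter_subset (q : IncClasses n) (i : ℕ) :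
    oneCycle n ((incShift n)^[i] q) ⊆ oneCycle n q := by
  rintro x ⟨j, rfl⟩
  refine ⟨j + i, ?_⟩
  show (incShift n)^[j + i] q = (incShift n)^[j] ((incShift n)^[i] q)
  exact Function.iterate_add_apply _ j i q

lemma oneCycle_eq_of_mem (hn : 0 < n) {q x : IncClasses n} (hx : x ∈ oneCycle n q) :
    oneCycle n x = oneCycle n q := by
  obtain ⟨i, rfl⟩ := hx
  refine Set.Subset.antisymm (oneCycle_iter_subset q i) ?_
  set p := minimalPeriod (incShift n) q with hp
  have hppos : 0 < p := minimalPeriod_pos_of_mem_periodicPts (mem_periodicPts_incShift hn q)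
  have hle : i + 1 ≤ p * (i + 1) := Nat.le_mul_of_pos_left _ hppos
  have hq : (incShift n)^[p * (i + 1) - i] ((incShift n)^[i] q) = q := by
    rw [← Function.iterate_add_apply]
    have he : p * (i + 1) - i + i = p * (i + 1) := by omega
    rw [he]
    exact (Function.isPeriodicPt_minimalPeriod (incShift n) q).mul_const (i + 1)
  conv_lhs => rw [← hq]
  exact oneCycle_iter_subset _ _

lemma ncard_oneCycle (hn : 0 < n) (q : IncClasses n) :
    (oneCycle n q).ncard = minimalPeriod (incShift n) q := by
  have hppos : 0 < minimalPeriod (incShift n) q :=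
    minimalPeriod_pos_of_mem_periodicPts (mem_periodicPts_incShift hn q)
  have himg : oneCycle n q
      = (fun i => (incShift n)^[i] q) '' ↑(Finset.range (minimalPeriod (incShift n) q)) := by
    ext x
    constructor
    · rintro ⟨i, rfl⟩
      exact ⟨i % minimalPeriod (incShift n) q,
        by simp [Nat.mod_lt _ hppos], Function.iterate_mod_minimalPeriod_eq⟩
    · rintro ⟨i, _, rfl⟩
      exact ⟨i, rfl⟩
  rw [himg, Set.ncard_image_of_injOn, Set.ncard_coe_finset, Finset.card_range]
  exact Function.iterate_injOn_Iio_minimalPeriod.mono (by rw [Finset.coe_range])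

lemma minimalPeriod_eq_of_mem (hn : 0 < n) {q x : IncClasses n} (hx : x ∈ oneCycle n q) :
    minimalPeriod (incShift n) x = minimalPeriod (incShift n) q := by
  obtain ⟨i, rfl⟩ := hx
  exact Function.minimalPeriod_apply_iterate (mem_periodicPts_incShift hn q) i

instance incClassesFinite [NeZero n] : Finite (IncClasses n) := Quotient.finite _

end Aux
section Count

open Function Subgroup

variable {n : ℕ}

lemma incSetoid_eq (n : ℕ) :
    incSetoid n = QuotientGroup.rightRel (Subgroup.zpowers (cyc n)) := by
  apply Setoid.ext
  intro a b
  rw [QuotientGroup.rightRel_apply]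
  constructor
  · rintro ⟨i, rfl⟩
    exact Subgroup.mem_zpowers_iff.mpr ⟨i, by group⟩
  · intro hmem
    obtain ⟨k, hk⟩ := Subgroup.mem_zpowers_iff.mp hmem
    exact ⟨k, by rw [hk]; group⟩

lemma card_IncClasses (hn : 0 < n) : Nat.card (IncClasses n) = (n - 1).factorial := by
  haveI : NeZero n := ⟨hn.ne'⟩
  have h0 : Nat.card (IncClasses n)
      = Nat.card (Quotient (QuotientGroup.rightRel (Subgroup.zpowers (cyc n)))) := by
    rw [IncClasses, incSetoid_eq]
  rw [h0, Nat.card_congr (QuotientGroup.quotientRightRelEquivQuotientLeftRel _)]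
  have h1 := Subgroup.card_eq_card_quotient_mul_card_subgroup (Subgroup.zpowers (cyc n))
  rw [Nat.card_zpowers, orderOf_cyc] at h1
  have h2 : Nat.card (Equiv.Perm (ZMod n)) = n.factorial := by
    rw [Nat.card_eq_fintype_card, Fintype.card_perm, ZMod.card]
  rw [h2] at h1
  have h3 : n.factorial = (n - 1).factorial * n := by
    rw [mul_comm, Nat.mul_factorial_pred hn.ne']
  apply Nat.eq_of_mul_eq_mul_right hn
  rw [← h1, h3]

lemma numCycles_mul_le (hn : 0 < n) (d : ℕ) :
    numCycles n d * d
      ≤ Nat.card {q : IncClasses n // minimalPeriod (incShift n) q = d} := by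
  haveI : NeZero n := ⟨hn.ne'⟩
  set C := {S : Set (IncClasses n) | (∃ q, S = oneCycle n q) ∧ S.ncard = d} with hC
  have hrep : ∀ S : C, ∃ q, (S : Set (IncClasses n)) = oneCycle n q := fun S => S.2.1
  choose rep hrepeq using hrep
  have hmp : ∀ S : C, minimalPeriod (incShift n) (rep S) = d := by
    intro S
    have h2 := S.2.2
    rw [hrepeq S, ncard_oneCycle hn] at h2
    exact h2
  set F : C × Fin d → {q : IncClasses n // minimalPeriod (incShift n) q = d} :=
    fun x => ⟨(incShift n)^[(x.2 : ℕ)] (rep x.1), by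
      rw [Function.minimalPeriod_apply_iterate (mem_periodicPts_incShift hn _)]
      exact hmp x.1⟩ with hF
  have hFinj : Function.Injective F := by
    rintro ⟨S, i⟩ ⟨S', i'⟩ h
    have hval : (incShift n)^[(i : ℕ)] (rep S) = (incShift n)^[(i' : ℕ)] (rep S') :=
      congrArg Subtype.val h
    have hSS' : S = S' := by
      apply Subtype.ext
      rw [hrepeq S, hrepeq S']
      calc oneCycle n (rep S)
          = oneCycle n ((incShift n)^[(i : ℕ)] (rep S)) :=
            (oneCycle_eq_of_mem hn ⟨(i : ℕ), rfl⟩).symm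
        _ = oneCycle n ((incShift n)^[(i' : ℕ)] (rep S')) := by rw [hval]
        _ = oneCycle n (rep S') := oneCycle_eq_of_mem hn ⟨(i' : ℕ), rfl⟩
    subst hSS'
    have hii : (i : ℕ) = (i' : ℕ) := by
      refine Function.iterate_injOn_Iio_minimalPeriod ?_ ?_ hval
      · rw [Set.mem_Iio, hmp S]; exact i.2
      · rw [Set.mem_Iio, hmp S]; exact i'.2
    exact Prod.ext rfl (Fin.ext hii)
  have hcard : numCycles n d * d = Nat.card (C × Fin d) := by
    rw [Nat.card_prod, Nat.card_eq_fintype_card (α := Fin d), Fintype.card_fin]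
    have : numCycles n d = Nat.card C := (Nat.card_coe_set_eq C).symm
    rw [this]
  rw [hcard]
  exact Nat.card_le_card_of_injective F hFinj

lemma sum_numCycles_mul_le (hn : 0 < n) :
    ∑ d ∈ n.divisors, numCycles n d * d ≤ (n - 1).factorial := by
  haveI : NeZero n := ⟨hn.ne'⟩
  classical
  haveI : Fintype (IncClasses n) := Fintype.ofFinite _
  have key : ∀ d : ℕ, numCycles n d * d
      ≤ (Finset.univ.filter
          (fun q : IncClasses n => minimalPeriod (incShift n) q = d)).card := by
    intro d
    refine (numCycles_mul_le hn d).trans ?_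
    rw [Nat.card_eq_fintype_card, Fintype.card_subtype]
  calc ∑ d ∈ n.divisors, numCycles n d * d
      ≤ ∑ d ∈ n.divisors, (Finset.univ.filter
          (fun q : IncClasses n => minimalPeriod (incShift n) q = d)).card :=
        Finset.sum_le_sum fun d _ => key d
    _ = ∑ d ∈ n.divisors, ((Finset.univ.filter
          (fun q : IncClasses n => minimalPeriod (incShift n) q ∈ n.divisors)).filter
          (fun q => minimalPeriod (incShift n) q = d)).card := by
        refine Finset.sum_congr rfl fun d hd => ?_
        congr 1
        ext q
        simp only [Finset.mem_filter, Finset.mem_univ, true_and, Finset.filter_filter]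
        constructor
        · intro h; exact ⟨h ▸ hd, h⟩
        · exact fun h => h.2
    _ = (Finset.univ.filter
          (fun q : IncClasses n => minimalPeriod (incShift n) q ∈ n.divisors)).card := by
        rw [← Finset.card_eq_sum_card_fiberwise]
        intro q hq
        simpa using hq
    _ ≤ Fintype.card (IncClasses n) := by
        rw [← Finset.card_univ]
        exact Finset.card_le_card (Finset.filter_subset _ _)
    _ = (n - 1).factorial := by rw [← Nat.card_eq_fintype_card, card_IncClasses hn]

lemma mp_card_le_fix (hn : 0 < n) (d : ℕ) :
    Nat.card {q : IncClasses n // minimalPeriod (incShift n) q = d}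
      ≤ Nat.card {q : IncClasses n // (incShift n)^[d] q = q} := by
  haveI : NeZero n := ⟨hn.ne'⟩
  refine Nat.card_le_card_of_injective
    (fun x => ⟨x.1, by
      obtain ⟨q, hq⟩ := x
      subst hq
      exact Function.iterate_minimalPeriod⟩) ?_
  intro x y h
  simp only [Subtype.mk.injEq] at h
  exact Subtype.ext h

end Count
section FixBound

open Function Subgroup

variable {n : ℕ}

lemma shift_addRight {d : ℕ} {π : Equiv.Perm (ZMod n)}
    (hπ : π * cyc n ^ d * π⁻¹ ∈ Subgroup.zpowers (cyc n)) :
    ∃ j : ZMod n, π * cyc n ^ d * π⁻¹ = Equiv.addRight j := by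
  obtain ⟨z, hz⟩ := Subgroup.mem_zpowers_iff.mp hπ
  exact ⟨((z : ℤ) : ZMod n), by rw [← hz, cyc_zpow_eq]⟩

lemma key_of_addRight {d : ℕ} {π : Equiv.Perm (ZMod n)} {j : ZMod n}
    (h : π * cyc n ^ d * π⁻¹ = Equiv.addRight j) (x : ZMod n) :
    π (x + (d : ZMod n)) = π x + j := by
  have h2 := congrArg (fun e : Equiv.Perm (ZMod n) => e (π x)) h
  simp only [Equiv.Perm.mul_apply, Equiv.coe_addRight, Equiv.Perm.inv_def, Equiv.symm_apply_apply] at h2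
  rw [cyc_pow_apply] at h2
  exact h2

lemma iterkey {d : ℕ} {π : Equiv.Perm (ZMod n)} {j : ZMod n}
    (h : π * cyc n ^ d * π⁻¹ = Equiv.addRight j) (m : ℕ) (x : ZMod n) :
    π (x + m • (d : ZMod n)) = π x + m • j := by
  induction m with
  | zero => simp
  | succ m ih =>
      rw [succ_nsmul, succ_nsmul, ← add_assoc, ← add_assoc, key_of_addRight h, ih]

lemma addOrderOf_shift [NeZero n] {d : ℕ} (hd : d ∣ n) {π : Equiv.Perm (ZMod n)} {j : ZMod n}
    (h : π * cyc n ^ d * π⁻¹ = Equiv.addRight j) :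
    addOrderOf j = n / d := by
  have h1 : orderOf (Equiv.addRight j : Equiv.Perm (ZMod n)) = orderOf (cyc n ^ d) := by
    rw [← h]
    have h2 : π * cyc n ^ d * π⁻¹ = (MulAut.conj π) (cyc n ^ d) := rfl
    rw [h2, MulEquiv.orderOf_eq]
  have hgcd : Nat.gcd n d = d := by rw [Nat.gcd_comm]; exact Nat.gcd_eq_left hd
  rw [orderOf_addRight, orderOf_pow, orderOf_cyc, hgcd] at h1
  exact h1

lemma dvd_mem_zmultiples (hn2 : 2 ≤ n) {d : ℕ} (hd : d ∣ n) (hd0 : 0 < d) {j : ZMod n}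
    (horder : addOrderOf j = n / d) :
    ((d : ℕ) : ZMod n) ∈ AddSubgroup.zmultiples j := by
  haveI : NeZero n := ⟨by omega⟩
  have hndpos : 0 < n / d := Nat.div_pos (Nat.le_of_dvd (by omega) hd) hd0
  have hj0 : (n / d) • j = 0 := by rw [← horder]; exact addOrderOf_nsmul_eq_zero j
  have hjval : ((j.val : ℕ) : ZMod n) = j := ZMod.natCast_rightInverse j
  have hdvd : (n : ℕ) ∣ (n / d) * j.val := by
    have h2 : (((n / d) * j.val : ℕ) : ZMod n) = 0 := by
      push_cast
      rw [hjval, ← nsmul_eq_mul, hj0]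
    exact (ZMod.natCast_eq_zero_iff _ n).mp h2
  have hn_eq : (n / d) * d = n := Nat.div_mul_cancel hd
  have hddvd : d ∣ j.val := by
    refine Nat.dvd_of_mul_dvd_mul_left hndpos ?_
    exact (dvd_of_eq hn_eq).trans hdvd
  obtain ⟨m, hm⟩ := hddvd
  have hjmem : j ∈ AddSubgroup.zmultiples ((d : ℕ) : ZMod n) := by
    refine AddSubgroup.mem_zmultiples_iff.mpr ⟨(m : ℤ), ?_⟩
    have h3 : ((d * m : ℕ) : ZMod n) = j := by rw [← hm, hjval]
    rw [← h3, natCast_zsmul, nsmul_eq_mul]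
    push_cast
    ring
  have hle : AddSubgroup.zmultiples j ≤ AddSubgroup.zmultiples ((d : ℕ) : ZMod n) :=
    AddSubgroup.zmultiples_le_of_mem hjmem
  have hcards : Nat.card (AddSubgroup.zmultiples ((d : ℕ) : ZMod n))
      ≤ Nat.card (AddSubgroup.zmultiples j) := by
    rw [Nat.card_zmultiples, Nat.card_zmultiples, horder,
      ZMod.addOrderOf_coe d (NeZero.ne n)]
    have hgcd : Nat.gcd n d = d := by rw [Nat.gcd_comm]; exact Nat.gcd_eq_left hd
    rw [hgcd]
  have heq : AddSubgroup.zmultiples j = AddSubgroup.zmultiples ((d : ℕ) : ZMod n) :=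
    AddSubgroup.eq_of_le_of_card_ge hle hcards
  rw [heq]
  exact AddSubgroup.mem_zmultiples _

end FixBound
section FixBound2

open Function Subgroup

variable {n : ℕ}

lemma fix_step1 (hn2 : 2 ≤ n) {d : ℕ} :
    Nat.card {q : IncClasses n // (incShift n)^[d] q = q} * n
      ≤ Nat.card {π : Equiv.Perm (ZMod n) //
          π * cyc n ^ d * π⁻¹ ∈ Subgroup.zpowers (cyc n)} := by
  haveI : NeZero n := ⟨by omega⟩
  have hmemT : ∀ q : {q : IncClasses n // (incShift n)^[d] q = q},
      (q.1.out) * cyc n ^ d * (q.1.out)⁻¹ ∈ Subgroup.zpowers (cyc n) := by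
    intro q
    have hfix := q.2
    rw [← Quotient.out_eq q.1, incShift_iterate] at hfix
    obtain ⟨i, hi⟩ := Quotient.exact hfix
    refine Subgroup.mem_zpowers_iff.mpr ⟨-i, ?_⟩
    have h2 : (cyc n ^ i)⁻¹ * q.1.out = q.1.out * cyc n ^ d := by
      conv_lhs => rw [hi]
      group
    rw [zpow_neg, ← h2]
    group
  have hrw : Nat.card {q : IncClasses n // (incShift n)^[d] q = q} * n
      = Nat.card ({q : IncClasses n // (incShift n)^[d] q = q} × ZMod n) := by
    rw [Nat.card_prod, Nat.card_zmod]
  rw [hrw]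
  set G1 : {q : IncClasses n // (incShift n)^[d] q = q} × ZMod n →
      {π : Equiv.Perm (ZMod n) // π * cyc n ^ d * π⁻¹ ∈ Subgroup.zpowers (cyc n)} :=
    fun x => ⟨cyc n ^ (x.2.val) * x.1.1.out, by
      obtain ⟨z, hz⟩ := Subgroup.mem_zpowers_iff.mp (hmemT x.1)
      refine Subgroup.mem_zpowers_iff.mpr ⟨z, ?_⟩
      have expand : (cyc n ^ (x.2.val) * x.1.1.out) * cyc n ^ d
            * (cyc n ^ (x.2.val) * x.1.1.out)⁻¹
          = cyc n ^ (x.2.val) * (x.1.1.out * cyc n ^ d * x.1.1.out⁻¹)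
            * (cyc n ^ (x.2.val))⁻¹ := by group
      rw [expand, ← hz]
      group⟩ with hG1
  refine Nat.card_le_card_of_injective G1 ?_
  rintro ⟨⟨q, hq⟩, k⟩ ⟨⟨q', hq'⟩, k'⟩ h
  simp only [hG1, Subtype.mk.injEq] at h
  have hqq' : q = q' := by
    rw [← Quotient.out_eq q, ← Quotient.out_eq q']
    refine Quotient.sound ⟨(k.val : ℤ) - (k'.val : ℤ), ?_⟩
    have h3 : q'.out = (cyc n ^ (k'.val))⁻¹ * (cyc n ^ (k.val) * q.out) := by
      rw [h]; group
    rw [h3]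
    group
  subst hqq'
  have hk : cyc n ^ (k.val) = cyc n ^ (k'.val) := mul_right_cancel h
  have hkval : k.val = k'.val := by
    have h4 := pow_inj_mod.mp hk
    rwa [orderOf_cyc, Nat.mod_eq_of_lt (ZMod.val_lt k),
      Nat.mod_eq_of_lt (ZMod.val_lt k')] at h4
  exact Prod.ext (Subtype.ext rfl) (ZMod.natCast_rightInverse.injective hkval)

end FixBound2
section FixBound3

open Function Subgroup

variable {n : ℕ}

lemma fix_step2 (hn2 : 2 ≤ n) {d : ℕ} (hd : d ∣ n) (hd0 : 0 < d) :
    Nat.card {π : Equiv.Perm (ZMod n) //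
        π * cyc n ^ d * π⁻¹ ∈ Subgroup.zpowers (cyc n)}
      ≤ (n / d).totient * (d.factorial * (n / d) ^ d) := by
  haveI : NeZero n := ⟨by omega⟩
  haveI : NeZero d := ⟨hd0.ne'⟩
  classical
  set p := ZMod.castHom hd (ZMod d) with hp
  -- kernel characterization
  have hker : ∀ x : ZMod n, p x = 0 → x ∈ AddSubgroup.zmultiples ((d : ℕ) : ZMod n) := by
    intro x hx
    have hxval : ((x.val : ℕ) : ZMod n) = x := ZMod.natCast_rightInverse x
    have h2 : ((x.val : ℕ) : ZMod d) = 0 := by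
      rw [← map_natCast p, hxval, hx]
    obtain ⟨m, hm⟩ := (ZMod.natCast_eq_zero_iff _ _).mp h2
    refine AddSubgroup.mem_zmultiples_iff.mpr ⟨(m : ℤ), ?_⟩
    rw [← hxval, hm, natCast_zsmul, nsmul_eq_mul]
    push_cast
    ring
  set T := {π : Equiv.Perm (ZMod n) //
      π * cyc n ^ d * π⁻¹ ∈ Subgroup.zpowers (cyc n)} with hT
  have hshift : ∀ π : T, ∃ j : ZMod n, π.1 * cyc n ^ d * π.1⁻¹ = Equiv.addRight j :=
    fun π => shift_addRight π.2
  choose jof hjof using hshift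
  have horder : ∀ π : T, addOrderOf (jof π) = n / d := fun π => addOrderOf_shift hd (hjof π)
  -- injectivity of the residue data
  have hG2mem : ∀ π : T, Function.Injective
      (fun r : Fin d => p (π.1 (((r : ℕ) : ZMod n)))) := by
    intro π r r' hrr
    simp only [] at hrr
    have h0 : p (π.1 ((r : ℕ) : ZMod n) - π.1 ((r' : ℕ) : ZMod n)) = 0 := by
      rw [map_sub, hrr, sub_self]
    have hmem := hker _ h0
    have hdm : ((d : ℕ) : ZMod n) ∈ AddSubgroup.zmultiples (jof π) :=
      dvd_mem_zmultiples hn2 hd hd0 (horder π)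
    have hmem2 : π.1 ((r : ℕ) : ZMod n) - π.1 ((r' : ℕ) : ZMod n)
        ∈ AddSubgroup.zmultiples (jof π) :=
      (AddSubgroup.zmultiples_le_of_mem hdm) hmem
    obtain ⟨z, hz⟩ := AddSubgroup.mem_zmultiples_iff.mp hmem2
    -- replace z by a natural number
    have hnj : n • (jof π) = 0 := by
      refine addOrderOf_dvd_iff_nsmul_eq_zero.mp ?_
      rw [horder π]
      exact Nat.div_dvd_of_dvd hd
    have hm : ((z % (n : ℤ)).toNat) • (jof π) = z • (jof π) := by
      have hnn : (0 : ℤ) ≤ z % (n : ℤ) := Int.emod_nonneg z (by exact_mod_cast (NeZero.ne n))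
      have h5 : (((z % (n : ℤ)).toNat : ℤ)) = z % (n : ℤ) := Int.toNat_of_nonneg hnn
      have hzdecomp : z = (n : ℤ) * (z / (n : ℤ)) + z % (n : ℤ) := (Int.mul_ediv_add_emod z _).symm
      calc ((z % (n : ℤ)).toNat) • (jof π) = (((z % (n : ℤ)).toNat : ℤ)) • (jof π) :=
            (natCast_zsmul _ _).symm
        _ = (z % (n : ℤ)) • (jof π) := by rw [h5]
        _ = z • (jof π) := by
            conv_rhs => rw [hzdecomp]
            rw [add_zsmul, mul_comm ((n : ℤ)) _, mul_zsmul, natCast_zsmul, hnj, smul_zero,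
              zero_add]
    set m := (z % (n : ℤ)).toNat with hmdef
    have heq : π.1 ((r : ℕ) : ZMod n) = π.1 (((r' : ℕ) : ZMod n) + m • ((d : ℕ) : ZMod n)) := by
      rw [iterkey (hjof π), hm, hz]
      ring
    have hinj := π.1.injective heq
    have happ := congrArg p hinj
    rw [map_add] at happ
    have hpd : p (m • ((d : ℕ) : ZMod n)) = 0 := by
      rw [map_nsmul, map_natCast, ZMod.natCast_self, smul_zero]
    rw [hpd, add_zero, map_natCast, map_natCast] at happ
    have hval := congrArg ZMod.val happ
    rw [ZMod.val_cast_of_lt r.2, ZMod.val_cast_of_lt r'.2] at hval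
    exact Fin.ext hval
  -- the injection into J × E
  set J := {j : ZMod n // addOrderOf j = n / d} with hJ
  set E := {g : Fin d → ZMod n // Function.Injective (fun r => p (g r))} with hE
  set G2 : T → J × E := fun π =>
    (⟨jof π, horder π⟩, ⟨fun r => π.1 ((r : ℕ) : ZMod n), hG2mem π⟩) with hG2
  have hG2inj : Function.Injective G2 := by
    intro π π' h
    simp only [hG2, Prod.mk.injEq, Subtype.mk.injEq] at h
    obtain ⟨hj, hg⟩ := h
    apply Subtype.ext
    ext x
    have hxval : ((x.val : ℕ) : ZMod n) = x := ZMod.natCast_rightInverse x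
    rw [← hxval]
    have hsplit : x.val = x.val % d + (x.val / d) * d := by
      rw [Nat.mod_add_div']
    have hcast : ((x.val : ℕ) : ZMod n)
        = (((x.val % d : ℕ) : ZMod n)) + (x.val / d) • ((d : ℕ) : ZMod n) := by
      rw [nsmul_eq_mul]
      conv_lhs => rw [hsplit]
      push_cast
      ring
    rw [hcast, iterkey (hjof π), iterkey (hjof π')]
    have hg2 := congrArg Subtype.val hg
    have hr := congrFun hg2 (⟨x.val % d, Nat.mod_lt _ hd0⟩ : Fin d)
    have hj2 : jof π = jof π' := congrArg Subtype.val hj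
    rw [hj2]
    congr 1
  calc Nat.card T ≤ Nat.card (J × E) := Nat.card_le_card_of_injective G2 hG2inj
    _ = (n / d).totient * (d.factorial * (n / d) ^ d) := by
      rw [Nat.card_prod]
      have hcardJ : Nat.card J = (n / d).totient := by
        rw [hJ, Nat.card_eq_fintype_card, Fintype.card_subtype]
        have h6 := IsAddCyclic.card_addOrderOf_eq_totient (α := ZMod n) (d := n / d)
          (by rw [ZMod.card]; exact Nat.div_dvd_of_dvd hd)
        convert h6 using 2
      have hsurj : Function.Surjective p := by
        intro y
        refine ⟨((y.val : ℕ) : ZMod n), ?_⟩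
        rw [map_natCast]
        exact ZMod.natCast_rightInverse y
      have hps : ∀ y : ZMod d, p ((y.val : ℕ) : ZMod n) = y := by
        intro y
        rw [map_natCast]
        exact ZMod.natCast_rightInverse y
      set K := p.toAddMonoidHom.ker with hK
      have hpker : ∀ x : K, p x.1 = 0 := fun x => AddMonoidHom.mem_ker.mp x.2
      have hcardK : Nat.card K = n / d := by
        have hq := AddSubgroup.card_eq_card_quotient_mul_card_addSubgroup K
        have hqe : Nat.card (ZMod n ⧸ K) = d := by
          rw [Nat.card_congr
            (QuotientAddGroup.quotientKerEquivOfSurjective p.toAddMonoidHom hsurj).toEquiv,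
            Nat.card_zmod]
        rw [Nat.card_zmod, hqe] at hq
        have h7 : d * Nat.card K / d = Nat.card K := Nat.mul_div_cancel_left _ hd0
        rw [← hq] at h7
        exact h7.symm
      have eqv : E ≃ (Fin d ↪ ZMod d) × (Fin d → K) :=
        { toFun := fun g => (⟨fun r => p (g.1 r), g.2⟩,
            fun r => ⟨g.1 r - (((p (g.1 r)).val : ℕ) : ZMod n), by
              rw [AddMonoidHom.mem_ker]
              show p _ = 0
              rw [map_sub, hps, sub_self]⟩)
          invFun := fun x => ⟨fun r => (((x.1 r).val : ℕ) : ZMod n) + (x.2 r).1, by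
            intro r r' hrr
            simp only [map_add, hps, hpker, add_zero] at hrr
            exact x.1.injective hrr⟩
          left_inv := by
            intro g
            apply Subtype.ext
            funext r
            show (((p (g.1 r)).val : ℕ) : ZMod n) + (g.1 r - (((p (g.1 r)).val : ℕ) : ZMod n))
              = g.1 r
            ring
          right_inv := by
            intro x
            have hfst : ∀ r : Fin d, p ((((x.1 r).val : ℕ) : ZMod n) + (x.2 r).1) = x.1 r := by
              intro r
              rw [map_add, hps, hpker, add_zero]
            refine Prod.ext (Function.Embedding.ext fun r => hfst r) ?_
            funext r
            apply Subtype.ext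
            show ((((x.1 r).val : ℕ) : ZMod n) + (x.2 r).1)
                - (((p ((((x.1 r).val : ℕ) : ZMod n) + (x.2 r).1)).val : ℕ) : ZMod n)
              = (x.2 r).1
            rw [hfst r]
            ring }
      have hcardE : Nat.card E = d.factorial * (n / d) ^ d := by
        rw [Nat.card_congr eqv, Nat.card_prod, Nat.card_eq_fintype_card (α := Fin d ↪ ZMod d),
          Fintype.card_embedding_eq, Fintype.card_fin, ZMod.card, Nat.descFactorial_self,
          Nat.card_fun, hcardK, Nat.card_eq_fintype_card (α := Fin d), Fintype.card_fin]
      rw [hcardJ, hcardE]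

end FixBound3
section Final

open Function

variable {n : ℕ}

lemma perd_bound (hn2 : 2 ≤ n) {d : ℕ} (hd : d ∣ n) (hd0 : 0 < d) :
    (numCycles n d : ℝ)
      ≤ (Nat.totient (n / d) : ℝ) * (n : ℝ) ^ (d - 1) * ((d - 1).factorial : ℝ)
          / (d : ℝ) ^ d := by
  have hn0 : 0 < n := by omega
  have hchain : numCycles n d * d * n ≤ (n / d).totient * (d.factorial * (n / d) ^ d) := by
    calc numCycles n d * d * n
        ≤ Nat.card {q : IncClasses n // Function.minimalPeriod (incShift n) q = d} * n :=
          Nat.mul_le_mul_right n (numCycles_mul_le hn0 d)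
      _ ≤ Nat.card {q : IncClasses n // (incShift n)^[d] q = q} * n :=
          Nat.mul_le_mul_right n (mp_card_le_fix hn0 d)
      _ ≤ _ := (fix_step1 hn2).trans (fix_step2 hn2 hd hd0)
  have hdR : (0 : ℝ) < (d : ℝ) := by exact_mod_cast hd0
  have hnR : (0 : ℝ) < (n : ℝ) := by exact_mod_cast hn0
  have hdiv : ((n / d : ℕ) : ℝ) = (n : ℝ) / (d : ℝ) := Nat.cast_div hd hdR.ne'
  have hreal : (numCycles n d : ℝ) * d * n
      ≤ (Nat.totient (n / d) : ℝ) * ((d.factorial : ℝ) * ((n : ℝ) / d) ^ d) := by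
    have hc := (Nat.cast_le (α := ℝ)).mpr hchain
    push_cast at hc
    rwa [hdiv] at hc
  have hfac : (d.factorial : ℝ) = (d : ℝ) * ((d - 1).factorial : ℝ) := by
    exact_mod_cast (Nat.mul_factorial_pred hd0.ne').symm
  have hpow : (n : ℝ) ^ (d - 1) * (n : ℝ) = (n : ℝ) ^ d := by
    rw [← pow_succ]
    congr 1
    omega
  rw [le_div_iff₀ (by positivity : (0 : ℝ) < (d : ℝ) ^ d)]
  rw [← mul_le_mul_iff_of_pos_right (by positivity : (0 : ℝ) < (d : ℝ) * (n : ℝ))]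
  calc (numCycles n d : ℝ) * (d : ℝ) ^ d * ((d : ℝ) * (n : ℝ))
      = ((numCycles n d : ℝ) * d * n) * (d : ℝ) ^ d := by ring
    _ ≤ ((Nat.totient (n / d) : ℝ) * ((d.factorial : ℝ) * ((n : ℝ) / d) ^ d)) * (d : ℝ) ^ d :=
        mul_le_mul_of_nonneg_right hreal (by positivity)
    _ = (Nat.totient (n / d) : ℝ) * (d.factorial : ℝ) * (n : ℝ) ^ d := by
        rw [div_pow]
        field_simp
    _ = (Nat.totient (n / d) : ℝ) * (n : ℝ) ^ (d - 1) * ((d - 1).factorial : ℝ)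
          * ((d : ℝ) * (n : ℝ)) := by
        rw [hfac, ← hpow]
        ring

end Final

/-- For every `n ≥ 2`, `B(n) ≤ B'(n)`. -/
theorem stmt4 (n : ℕ) (hn : 2 ≤ n) : (Bbound n : ℝ) ≤ Bprime n := by
  have hn0 : 0 < n := by omega
  have hsplit : Bbound n = 1 + ((∑ d ∈ n.divisors, numCycles n d * d)
      + (∑ d ∈ n.divisors, numCycles n d) * (n - 2)) := by
    rw [Bbound]
    congr 1
    rw [Finset.sum_mul, ← Finset.sum_add_distrib]
    refine Finset.sum_congr rfl fun d hd => ?_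
    have hd1 : 1 ≤ d := Nat.pos_of_mem_divisors hd
    have he : d + n - 2 = d + (n - 2) := by omega
    rw [he, Nat.mul_add]
  have hcast : ((1 + ((∑ d ∈ n.divisors, numCycles n d * d)
      + (∑ d ∈ n.divisors, numCycles n d) * (n - 2)) : ℕ) : ℝ)
      = 1 + ((∑ d ∈ n.divisors, numCycles n d * d : ℕ) : ℝ)
        + ((∑ d ∈ n.divisors, numCycles n d : ℕ) : ℝ) * ((n : ℝ) - 2) := by
    push_cast [Nat.cast_sub hn]
    ring
  rw [hsplit, hcast, Bprime]
  have h1 : ((∑ d ∈ n.divisors, numCycles n d * d : ℕ) : ℝ) ≤ ((n - 1).factorial : ℝ) :=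
    Nat.cast_le.mpr (sum_numCycles_mul_le hn0)
  have h2 : ((∑ d ∈ n.divisors, numCycles n d : ℕ) : ℝ)
      ≤ ∑ d ∈ n.divisors, (Nat.totient (n / d) : ℝ) * (n : ℝ) ^ (d - 1)
          * ((d - 1).factorial : ℝ) / (d : ℝ) ^ d := by
    push_cast
    exact Finset.sum_le_sum fun d hd =>
      perd_bound hn (Nat.dvd_of_mem_divisors hd) (Nat.pos_of_mem_divisors hd)
  have hge : (0 : ℝ) ≤ (n : ℝ) - 2 := by
    have : (2 : ℝ) ≤ (n : ℝ) := by exact_mod_cast hn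
    linarith
  have h3 : ((∑ d ∈ n.divisors, numCycles n d : ℕ) : ℝ) * ((n : ℝ) - 2)
      ≤ (∑ d ∈ n.divisors, (Nat.totient (n / d) : ℝ) * (n : ℝ) ^ (d - 1)
          * ((d - 1).factorial : ℝ) / (d : ℝ) ^ d) * ((n : ℝ) - 2) :=
    mul_le_mul_of_nonneg_right h2 hge
  nlinarith [h1, h3]
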